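/- Let Ω ⊆ ℝⁿ be a nonempty closed convex set, y ∈ ℝⁿ fixed, and V(x) := (1/2)(‖x - P_Ω(y)‖² - ‖x - P_Ω(x)‖²). Then V(x) ≥ (1/2)‖P_Ω(x) - P_Ω(y)‖² ≥ 0 for all x ∈ ℝⁿ. -/
import Mathlib


open RealInnerProductSpace

set_option maxHeartbeats 1000000 in
/-- For `V(x) := (1/2)(‖x - P y‖² - ‖x - P x‖²)` with `P` the Euclidean projection onto a
nonempty closed convex set `Ω` and `y` fixed, `V(x) ≥ (1/2)‖P x - P y‖² ≥ 0` for all `x`. -/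
theorem projection_lyapunov_nonneg {n : ℕ}
    (Ω : Set (EuclideanSpace ℝ (Fin n))) (hne : Ω.Nonempty)
    (hcl : IsClosed Ω) (hconv : Convex ℝ Ω)
    (P : EuclideanSpace ℝ (Fin n) → EuclideanSpace ℝ (Fin n))
    (hP : ∀ x, P x ∈ Ω ∧ ∀ z ∈ Ω, ‖x - P x‖ ≤ ‖x - z‖)
    (y : EuclideanSpace ℝ (Fin n))
    (V : EuclideanSpace ℝ (Fin n) → ℝ)
    (hV : ∀ x, V x = (1 / 2) * (‖x - P y‖ ^ 2 - ‖x - P x‖ ^ 2)) :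
    ∀ x, V x ≥ (1 / 2) * ‖P x - P y‖ ^ 2 ∧ (1 / 2) * ‖P x - P y‖ ^ 2 ≥ 0 := by
  intro x
  have hne' : Nonempty Ω := hne.to_subtype
  -- variational inequality
  have hinf : ‖x - P x‖ = ⨅ w : Ω, ‖x - w‖ := by
    apply le_antisymm
    · exact le_ciInf fun w => (hP x).2 w w.2
    · have hbdd : BddBelow (Set.range fun w : Ω => ‖x - (w : EuclideanSpace ℝ (Fin n))‖) :=
        ⟨0, Set.forall_mem_range.2 fun w => norm_nonneg _⟩
      exact ciInf_le hbdd ⟨P x, (hP x).1⟩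
  have hvar : ∀ z ∈ Ω, ⟪x - P x, z - P x⟫ ≤ 0 :=
    (norm_eq_iInf_iff_real_inner_le_zero hconv (hP x).1).1 hinf
  have hkey : ⟪x - P x, P y - P x⟫ ≤ 0 := hvar _ (hP y).1
  have hsq : ‖x - P y‖ ^ 2 = ‖x - P x‖ ^ 2 + 2 * ⟪x - P x, P x - P y⟫ + ‖P x - P y‖ ^ 2 := by
    have h : x - P y = (x - P x) + (P x - P y) := by abel
    rw [h, @norm_add_sq_real]
  have hge : ⟪x - P x, P x - P y⟫ ≥ 0 := by
    have : P x - P y = -(P y - P x) := by abel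
    rw [this, inner_neg_right]; linarith
  constructor
  · rw [hV x, hsq]; nlinarith
  · positivity
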